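/- arXiv:1110.1934 — 4 statements merged into one kernel-verified Lean document; each statement's English description precedes it below -/
import Mathlib

section
/- If B ⊂ ℝ² has H¹(B) > 0 and there exist a line L through the origin and an angle α > 0 such that for every x ∈ B the cone C(x, L, α) = {y ∈ ℝ² : dist(y − x, L) ≤ α|x − y|} meets B only in x, then B is 1-rectifiable. -/
open Function Metric MeasureTheory Set
open scoped NNReal ComplexConjugate

/-!
The cone condition says that on `B` the coordinate `z ↦ Im (conj u * z)`, orthogonal to the line
`ℝ u`, changes by at least `α` times the distance. Hence its inverse on its image is
`α⁻¹`-Lipschitz, i.e. `B` is the graph of a Lipschitz function over the orthogonal line, and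
extending that function to all of `ℝ` gives a single Lipschitz curve containing `B`.
-/

theorem exists_lipschitzWith_subset_range_of_antilipschitzWith {X E : Type*}
    [PseudoMetricSpace X] [NormedAddCommGroup E] [NormedSpace ℝ E] [FiniteDimensional ℝ E]
    {B : Set E} {φ : E → X} {K : ℝ≥0} (hφ : AntilipschitzWith K (B.domRestrict φ)) :
    ∃ (C : ℝ≥0) (g : X → E), LipschitzWith C g ∧ B ⊆ range g := by
  have hinj : InjOn φ B := injOn_iff_injective.mpr hφ.injective
  have hlip : LipschitzOnWith K (invFunOn φ B) (φ '' B) :=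
    lipschitzOnWith_iff_restrict.mpr <| hφ.to_rightInvOn'
      (surjOn_image φ B).mapsTo_invFunOn (surjOn_image φ B).rightInvOn_invFunOn
  obtain ⟨g, hg, hgeq⟩ := hlip.extend_finite_dimension
  refine ⟨_, g, hg, fun x hx => ⟨φ x, ?_⟩⟩
  rw [← hgeq (mem_image_of_mem φ hx), hinj.leftInvOn_invFunOn hx]

theorem Complex.infDist_span_singleton_le {u : ℂ} (hu : ‖u‖ = 1) (z : ℂ) :
    infDist z (Submodule.span ℝ {u} : Set ℂ) ≤ |(conj u * z).im| := by
  set w := conj u * z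
  have hz : u * w = z := by
    rw [← mul_assoc, mul_comm u, ← Complex.normSq_eq_conj_mul_self, Complex.normSq_eq_norm_sq,
      hu]
    simp
  have hmem : (w.re : ℂ) * u ∈ (Submodule.span ℝ {u} : Set ℂ) := by
    rw [← Complex.real_smul]
    exact Submodule.smul_mem _ _ (Submodule.mem_span_singleton_self u)
  calc infDist z (Submodule.span ℝ {u} : Set ℂ)
      ≤ dist z ((w.re : ℂ) * u) := infDist_le_dist_of_mem hmem
    _ = ‖u * (w - w.re)‖ := by rw [dist_eq_norm, ← hz]; ring_nf
    _ = |w.im| := by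
      have him : w - w.re = w.im * Complex.I := by
        apply Complex.ext <;> simp
      rw [norm_mul, hu, one_mul, him]
      simp

theorem Complex.antilipschitzWith_im_conj_mul_of_cone {B : Set ℂ} {u : ℂ} (hu : ‖u‖ = 1)
    {α : ℝ} (hα : 0 < α)
    (hcone : ∀ x ∈ B, ∀ y ∈ B,
      infDist (y - x) (Submodule.span ℝ {u} : Set ℂ) ≤ α * dist x y → y = x) :
    AntilipschitzWith (Real.toNNReal α⁻¹) (B.domRestrict fun z => (conj u * z).im) := by
  refine AntilipschitzWith.of_le_mul_dist fun ⟨x, hx⟩ ⟨y, hy⟩ => ?_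
  simp only [Subtype.dist_eq, domRestrict_apply, Real.coe_toNNReal _ (inv_nonneg.mpr hα.le)]
  rw [← div_eq_inv_mul, le_div_iff₀' hα]
  by_contra! hlt
  have hcone_xy : infDist (y - x) (Submodule.span ℝ {u} : Set ℂ) ≤ α * dist x y := by
    calc infDist (y - x) (Submodule.span ℝ {u} : Set ℂ) ≤ |(conj u * (y - x)).im| :=
          Complex.infDist_span_singleton_le hu _
      _ = dist (conj u * x).im (conj u * y).im := by
          rw [Real.dist_eq, abs_sub_comm, mul_sub, Complex.sub_im]
      _ ≤ α * dist x y := hlt.le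
  rw [hcone x hx y hy hcone_xy] at hlt
  simp at hlt

theorem stmt_7_general (B : Set ℂ)
    (u : ℂ) (hu : ‖u‖ = 1) (α : ℝ) (hα : 0 < α)
    (hcone : ∀ x ∈ B, ∀ y ∈ B,
      Metric.infDist (y - x) ((Submodule.span ℝ {u} : Submodule ℝ ℂ) : Set ℂ) ≤ α * dist x y →
      y = x) :
    ∃ (f : ℕ → ℝ → ℂ) (C : ℕ → NNReal),
      (∀ n, LipschitzWith (C n) (f n)) ∧
      μH[1] (B \ ⋃ n, Set.range (f n)) = 0 := by
  obtain ⟨C, g, hg, hBg⟩ := exists_lipschitzWith_subset_range_of_antilipschitzWith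
    (Complex.antilipschitzWith_im_conj_mul_of_cone hu hα hcone)
  refine ⟨fun _ => g, fun _ => C, fun _ => hg, ?_⟩
  rw [sdiff_eq_empty.mpr (hBg.trans (subset_iUnion (fun _ : ℕ => range g) 0)), measure_empty]

/-- If `B ⊂ ℝ²` has `H¹(B) > 0` and there are a line `L` through the origin and `α > 0`
such that for every `x ∈ B` the cone `C(x, L, α)` meets `B` only at `x`, then `B` is
1-rectifiable: up to an `H¹`-null set, `B` is covered by countably many Lipschitz images of `ℝ`. -/
theorem stmt_7 (B : Set ℂ) (hpos : 0 < μH[1] B)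
    (u : ℂ) (hu : ‖u‖ = 1) (α : ℝ) (hα : 0 < α)
    (hcone : ∀ x ∈ B, ∀ y ∈ B,
      Metric.infDist (y - x) ((Submodule.span ℝ {u} : Submodule ℝ ℂ) : Set ℂ) ≤ α * dist x y →
      y = x) :
    ∃ (f : ℕ → ℝ → ℂ) (C : ℕ → NNReal),
      (∀ n, LipschitzWith (C n) (f n)) ∧
      μH[1] (B \ ⋃ n, Set.range (f n)) = 0 :=
  stmt_7_general B u hu α hα hcone
end

section
/- Let K ⊂ ℝ² be the attractor of a finite system of contractive similitudes {ψ_1, …, ψ_q}, all with rational rotation angles, and assume ψ_{j₀}(0) = 0 for some j₀ (i.e., 0 is a fixed point of one of the maps). Then the set K₀ of points of the form ψ_{i₁} ∘ ⋯ ∘ ψ_{i_k}(0), where the composition has type [Id, Id], is dense in K. -/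
/-!
Write `x ∈ K` as `x = ψ_l y` with `y ∈ K` and `l` a word of length `k`. The map `ψ_l` is a
similitude with rational rotation, so its square preserves orientation and a further power kills
the rotation: `ψ_l^[n]` has type `[Id, Id]` for some `n ≥ 1`. The point
`ψ_l^[n] 0 = ψ_l (ψ_l^[n-1] 0)` lies within `ρ ^ k * (diam K + dist x 0)` of `x`, where `ρ < 1`
bounds all contraction ratios, because `ψ_l^[n-1]` is non-expanding and preserves `K`.
-/

open Metric Set Complex ComplexConjugate Real Bornology
open scoped NNReal

def conjIf (s : Bool) : ℂ →+* ℂ := cond s (starRingEnd ℂ) (RingHom.id ℂ)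

lemma conjIf_apply (s : Bool) (z : ℂ) : conjIf s z = if s then conj z else z := by
  cases s <;> rfl

@[simp] lemma conjIf_ofReal (s : Bool) (c : ℝ) : conjIf s c = c := by
  cases s <;> simp [conjIf_apply]

@[simp] lemma conjIf_conjIf (s t : Bool) (z : ℂ) : conjIf s (conjIf t z) = conjIf (xor s t) z := by
  cases s <;> cases t <;> simp [conjIf_apply]

lemma dist_conjIf (s : Bool) (z z' : ℂ) : dist (conjIf s z) (conjIf s z') = dist z z' := by
  cases s <;> simp [conjIf_apply, Complex.dist_eq, ← map_sub]

/-- Similitudes `z ↦ c u σ(z) + w` with rational rotation angle, i.e. `u` a root of unity;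
`σ` is conjugation exactly when `s`. -/
def IsRatSimilitude (f : ℂ → ℂ) (s : Bool) : Prop :=
  ∃ (c : ℝ) (u w : ℂ), 0 < c ∧ IsOfFinOrder u ∧ ∀ z, f z = c * u * conjIf s z + w

/-- The similitudes of type `[Id, Id]`: positive homotheties and translations. -/
def IsDilation (f : ℂ → ℂ) : Prop :=
  ∃ (c : ℝ) (w : ℂ), 0 < c ∧ ∀ z, f z = c * z + w

lemma isOfFinOrder_exp_two_pi_rat_mul_I (a : ℚ) : IsOfFinOrder (exp (2 * π * a * I)) := by
  refine isOfFinOrder_iff_pow_eq_one.2 ⟨2 * (2 * a).den, by positivity, ?_⟩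
  simpa [mul_assoc, mul_left_comm] using exp_rat_mul_pi_mul_I_pow_two_mul_den (2 * a)

lemma IsRatSimilitude.id : IsRatSimilitude id false :=
  ⟨1, 1, 0, one_pos, IsOfFinOrder.one, fun z => by simp [conjIf_apply]⟩

lemma IsRatSimilitude.comp {f g : ℂ → ℂ} {s t : Bool} (hf : IsRatSimilitude f s)
    (hg : IsRatSimilitude g t) : IsRatSimilitude (f ∘ g) (xor s t) := by
  obtain ⟨c, u, w, hc, hu, hf⟩ := hf
  obtain ⟨c', u', w', hc', hu', hg⟩ := hg
  refine ⟨c * c', u * conjIf s u', c * u * conjIf s w' + w, mul_pos hc hc',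
    hu.mul ((conjIf s).toMonoidHom.isOfFinOrder hu'), fun z => ?_⟩
  simp only [Function.comp_apply, hf, hg, map_add, map_mul, conjIf_ofReal, conjIf_conjIf]
  push_cast
  ring

lemma exists_iterate_eq_pow_mul_add {R : Type*} [CommSemiring R] {g : R → R} {a b : R}
    (hg : ∀ z, g z = a * z + b) (n : ℕ) : ∃ W, ∀ z, g^[n] z = a ^ n * z + W := by
  induction n with
  | zero => exact ⟨0, fun z => by simp⟩
  | succ n ih =>
    obtain ⟨W, hW⟩ := ih
    exact ⟨a * W + b, fun z => by rw [Function.iterate_succ_apply', hW, hg]; ring⟩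

lemma IsRatSimilitude.exists_iterate_isDilation_of_false {f : ℂ → ℂ}
    (hf : IsRatSimilitude f false) : ∃ n, 0 < n ∧ IsDilation f^[n] := by
  obtain ⟨c, u, w, hc, hu, hf⟩ := hf
  obtain ⟨W, hW⟩ := exists_iterate_eq_pow_mul_add (g := f) (a := c * u) (b := w)
    (fun z => hf z) (orderOf u)
  refine ⟨orderOf u, hu.orderOf_pos, c ^ orderOf u, W, pow_pos hc _, fun z => ?_⟩
  rw [hW, mul_pow, pow_orderOf_eq_one]
  push_cast
  ring

lemma IsRatSimilitude.exists_iterate_isDilation {f : ℂ → ℂ} {s : Bool}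
    (hf : IsRatSimilitude f s) : ∃ n, 0 < n ∧ IsDilation f^[n] := by
  have hf2 : IsRatSimilitude (f ∘ f) false := Bool.xor_self s ▸ hf.comp hf
  obtain ⟨n, hn, hdil⟩ := hf2.exists_iterate_isDilation_of_false
  exact ⟨2 * n, by positivity, by rwa [Function.iterate_mul]⟩

lemma dist_similitude (c : ℝ) (hc : 0 ≤ c) {u : ℂ} (hu : ‖u‖ = 1) (s : Bool) (w z z' : ℂ) :
    dist (c * u * conjIf s z + w) (c * u * conjIf s z' + w) = c * dist z z' := by
  rw [dist_add_right, Complex.dist_eq, ← mul_sub, norm_mul, ← Complex.dist_eq, dist_conjIf,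
    norm_mul, hu, norm_real, Real.norm_of_nonneg hc, mul_one]

lemma exists_nnreal_lt_one_forall_le {ι : Type*} [Finite ι] {r : ι → ℝ} (hr : ∀ i, r i < 1) :
    ∃ ρ : ℝ≥0, ρ < 1 ∧ ∀ i, r i ≤ ρ := by
  cases isEmpty_or_nonempty ι
  · exact ⟨0, zero_lt_one, fun i => isEmptyElim i⟩
  · obtain ⟨j, hj⟩ := Finite.exists_max r
    exact ⟨(r j).toNNReal, Real.toNNReal_lt_one.2 (hr j),
      fun i => (hj i).trans (Real.le_coe_toNNReal _)⟩

lemma dist_le_diam_add_dist {α : Type*} [PseudoMetricSpace α] {K : Set α} {g : α → α}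
    (hK : IsBounded K) (hg : MapsTo g K K) (hlip : LipschitzWith 1 g) {x y : α} (hx : x ∈ K)
    (hy : y ∈ K) (p : α) : dist y (g p) ≤ diam K + dist x p :=
  calc dist y (g p) ≤ dist y (g x) + dist (g x) (g p) := dist_triangle _ _ _
    _ ≤ diam K + dist x p :=
      add_le_add (dist_le_diam_of_mem hK hy (hg hx)) (by simpa using hlip.dist_le_mul x p)

section compWord

variable {ι α : Type*} (ψ : ι → α → α)

def compWord (l : List ι) : α → α :=
  l.foldr (fun i f => ψ i ∘ f) id

@[simp] lemma compWord_nil : compWord ψ [] = id := rfl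

@[simp] lemma compWord_cons (i : ι) (l : List ι) :
    compWord ψ (i :: l) = ψ i ∘ compWord ψ l := rfl

lemma compWord_append (l l' : List ι) :
    compWord ψ (l ++ l') = compWord ψ l ∘ compWord ψ l' := by
  induction l with
  | nil => rfl
  | cons i l ih => rw [List.cons_append, compWord_cons, compWord_cons, ih]; rfl

lemma compWord_flatten_replicate (l : List ι) (n : ℕ) :
    compWord ψ (List.replicate n l).flatten = (compWord ψ l)^[n] := by
  induction n with
  | zero => rfl
  | succ n ih =>
    rw [List.replicate_succ, List.flatten_cons, compWord_append, ih, Function.iterate_succ']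

variable {ψ}

lemma mapsTo_compWord {K : Set α} (h : ∀ i, MapsTo (ψ i) K K) (l : List ι) :
    MapsTo (compWord ψ l) K K := by
  induction l with
  | nil => exact mapsTo_id K
  | cons i l ih => exact (h i).comp ih

lemma exists_compWord_eq_of_mem {K : Set α} (hK : K ⊆ ⋃ i, ψ i '' K) (k : ℕ) {x : α}
    (hx : x ∈ K) : ∃ l : List ι, l.length = k ∧ ∃ y ∈ K, x = compWord ψ l y := by
  induction k generalizing x with
  | zero => exact ⟨[], rfl, x, hx, rfl⟩
  | succ k ih =>
    obtain ⟨i, y, hy, rfl⟩ := mem_iUnion.1 (hK hx)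
    obtain ⟨l, hlen, y', hy', rfl⟩ := ih hy
    exact ⟨i :: l, by simp [hlen], y', hy', rfl⟩

lemma lipschitzWith_compWord [PseudoEMetricSpace α] {ρ : ℝ≥0} (h : ∀ i, LipschitzWith ρ (ψ i))
    (l : List ι) : LipschitzWith (ρ ^ l.length) (compWord ψ l) := by
  induction l with
  | nil => simpa using LipschitzWith.id
  | cons i l ih => simpa [pow_succ'] using (h i).comp ih

lemma isRatSimilitude_compWord {ψ : ι → ℂ → ℂ} {b : ι → Bool}
    (h : ∀ i, IsRatSimilitude (ψ i) (b i)) (l : List ι) : ∃ s, IsRatSimilitude (compWord ψ l) s := by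
  induction l with
  | nil => exact ⟨false, IsRatSimilitude.id⟩
  | cons i l ih =>
    obtain ⟨s, hs⟩ := ih
    exact ⟨_, (h i).comp hs⟩

end compWord

theorem subset_closure_setOf_isDilation_compWord {ι : Type*} {ψ : ι → ℂ → ℂ} {b : ι → Bool}
    {ρ : ℝ≥0} {K : Set ℂ} (hsim : ∀ i, IsRatSimilitude (ψ i) (b i))
    (hlip : ∀ i, LipschitzWith ρ (ψ i)) (hρ1 : ρ < 1) (hK : IsBounded K)
    (hattr : K = ⋃ i, ψ i '' K) (p : ℂ) :
    K ⊆ closure {x | ∃ l : List ι, l ≠ [] ∧ IsDilation (compWord ψ l) ∧ x = compWord ψ l p} := by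
  have hmaps : ∀ i, MapsTo (ψ i) K K := fun i =>
    mapsTo_iff_image_subset.2 ((subset_iUnion (fun i => ψ i '' K) i).trans hattr.ge)
  intro x hx
  rw [Metric.mem_closure_iff]
  intro ε hε
  obtain ⟨k, hkε, hk0⟩ := (((tendsto_pow_atTop_nhds_zero_of_lt_one ρ.2 hρ1).mul_const
    (diam K + dist x p)).eventually_lt_const (by simpa using hε) |>.and
    (Filter.eventually_gt_atTop 0)).exists
  obtain ⟨l, rfl, y, hy, hxy⟩ := exists_compWord_eq_of_mem hattr.le k hx
  obtain ⟨s, hl⟩ := isRatSimilitude_compWord hsim l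
  obtain ⟨_ | m, hn, hdil⟩ := hl.exists_iterate_isDilation
  · exact absurd hn (lt_irrefl 0)
  have hL : (List.replicate (m + 1) l).flatten ≠ [] := by
    simpa [List.flatten_eq_nil_iff, ← List.length_pos_iff] using hk0
  refine ⟨_, ⟨_, hL, by rwa [← compWord_flatten_replicate] at hdil, rfl⟩, ?_⟩
  have hΦ := lipschitzWith_compWord hlip l
  rw [hxy]
  calc dist (compWord ψ l y) (compWord ψ (List.replicate (m + 1) l).flatten p)
      = dist (compWord ψ l y) (compWord ψ l ((compWord ψ l)^[m] p)) := by
        rw [compWord_flatten_replicate, Function.iterate_succ_apply']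
    _ ≤ ρ ^ l.length * dist y ((compWord ψ l)^[m] p) := by simpa using hΦ.dist_le_mul _ _
    _ ≤ ρ ^ l.length * (diam K + dist x p) := by
        gcongr
        exact dist_le_diam_add_dist hK ((mapsTo_compWord hmaps l).iterate m)
          ((hΦ.iterate m).weaken (pow_le_one₀ zero_le (pow_le_one₀ zero_le hρ1.le)))
          hx hy p
    _ < ε := hkε

theorem stmt_8_general (q : ℕ) (r : Fin q → ℝ) (θ : Fin q → ℝ) (b : Fin q → Bool)
    (w : Fin q → ℂ) (ψ : Fin q → ℂ → ℂ)
    (hr : ∀ j, r j ∈ Set.Ioo (0:ℝ) 1)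
    (hθ : ∀ j, ∃ a : ℚ, θ j = (a : ℝ))
    (hψ : ∀ j z, ψ j z = (r j : ℂ) *
        (Complex.exp (2 * Real.pi * (θ j) * Complex.I) *
          (if b j then (starRingEnd ℂ) z else z)) + w j)
    (K : Set ℂ) (hKc : IsCompact K) (hattr : K = ⋃ j, ψ j '' K) :
    K ⊆ closure {x : ℂ | ∃ l : List (Fin q), l ≠ [] ∧
      (∃ (c : ℝ) (w' : ℂ), 0 < c ∧
        ∀ z, (l.foldr (fun i f => ψ i ∘ f) id) z = (c : ℂ) * z + w') ∧
      x = (l.foldr (fun i f => ψ i ∘ f) id) 0} := by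
  have hψ' : ∀ j z, ψ j z = r j * exp (2 * π * θ j * I) * conjIf (b j) z + w j := fun j z => by
    rw [hψ, conjIf_apply, ← mul_assoc]
  have hsim : ∀ j, IsRatSimilitude (ψ j) (b j) := fun j => by
    obtain ⟨a, ha⟩ := hθ j
    exact ⟨r j, _, w j, (hr j).1, by simpa [ha] using isOfFinOrder_exp_two_pi_rat_mul_I a, hψ' j⟩
  obtain ⟨ρ, hρ1, hrρ⟩ := exists_nnreal_lt_one_forall_le fun j => (hr j).2
  have hlip : ∀ j, LipschitzWith ρ (ψ j) := fun j => LipschitzWith.of_dist_le_mul fun z z' => by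
    rw [hψ', hψ', dist_similitude _ (hr j).1.le (by norm_cast; exact norm_exp_ofReal_mul_I _)]
    gcongr
    exact hrρ j
  exact subset_closure_setOf_isDilation_compWord hsim hlip hρ1 hKc.isBounded hattr 0

/-- If `K` is the attractor of similitudes `ψ_j` with rational rotation angles and `0` is a
fixed point of one of the maps, then the set `K₀` of points `ψ_{i₁} ∘ ⋯ ∘ ψ_{i_k}(0)` for
words whose composition has type `[Id, Id]` is dense in `K`. -/
theorem stmt_8 (q : ℕ) (hq : 0 < q) (r : Fin q → ℝ) (θ : Fin q → ℝ) (b : Fin q → Bool)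
    (w : Fin q → ℂ) (ψ : Fin q → ℂ → ℂ)
    (hr : ∀ j, r j ∈ Set.Ioo (0:ℝ) 1)
    (hθ : ∀ j, ∃ a : ℚ, θ j = (a : ℝ))
    (hψ : ∀ j z, ψ j z = (r j : ℂ) *
        (Complex.exp (2 * Real.pi * (θ j) * Complex.I) *
          (if b j then (starRingEnd ℂ) z else z)) + w j)
    (K : Set ℂ) (hKc : IsCompact K) (hKne : K.Nonempty) (hattr : K = ⋃ j, ψ j '' K)
    (j₀ : Fin q) (hfix : ψ j₀ 0 = 0) :
    K ⊆ closure {x : ℂ | ∃ l : List (Fin q), l ≠ [] ∧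
      (∃ (c : ℝ) (w' : ℂ), 0 < c ∧
        ∀ z, (l.foldr (fun i f => ψ i ∘ f) id) z = (c : ℂ) * z + w') ∧
      x = (l.foldr (fun i f => ψ i ∘ f) id) 0} :=
  stmt_8_general q r θ b w ψ hr hθ hψ K hKc hattr
end

section
/- Let ψ be a contractive similitude of ℝ² with rational rotation type, contraction ratio r ≤ ε, and ψ(0) ∈ B(x, ε) for some x, and suppose ψ maps the closed unit ball into itself. Then there exists n ∈ ℕ such that the n-fold iterate ψⁿ has type [Id, Id] and ψⁿ(0) ∈ B(x, 2ε). -/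
open Metric Set Complex
open scoped ComplexConjugate

/-!
Write `ψ z = a · σ(z) + w` with `a = r e^{2πiθ}` and `σ` the identity or complex conjugation.
If `σ` is conjugation, `ψ²(z) = |a|² z + const`; otherwise `ψⁿ(z) = aⁿ z + const`, and
`aⁿ = rⁿ > 0` for `n` the denominator of `θ`. For the position of `ψⁿ(0)`, note that
`ψⁿ⁻¹(0)` stays in the unit ball, so `ψⁿ(0)` is within `r ≤ ε` of `ψ(0)`, which is within `ε`
of `x`.
-/

theorem Complex.exp_two_pi_rat_mul_I_pow_den (q : ℚ) :
    exp (2 * Real.pi * ((q : ℝ) : ℂ) * I) ^ q.den = 1 := by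
  rw [← exp_nat_mul, ← exp_int_mul_two_pi_mul_I q.num]
  congr 1
  have hnum : (q.den : ℂ) * q = q.num := by exact_mod_cast Rat.den_mul_eq_num q
  push_cast
  linear_combination (2 * Real.pi * I) * hnum

theorem iterate_affine_apply {R : Type*} [CommSemiring R] {f : R → R} {a w : R}
    (hf : ∀ z, f z = a * z + w) (n : ℕ) (z : R) :
    f^[n] z = a ^ n * z + (∑ i ∈ Finset.range n, a ^ i) * w := by
  induction n with
  | zero => simp
  | succ n ih => rw [Function.iterate_succ_apply', ih, hf, geom_sum_succ]; ring

theorem iterate_two_conj_affine_apply {f : ℂ → ℂ} {a w : ℂ}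
    (hf : ∀ z, f z = a * conj z + w) (z : ℂ) :
    f^[2] z = ((‖a‖ ^ 2 : ℝ) : ℂ) * z + (a * conj w + w) := by
  simp only [Function.iterate_succ, Function.iterate_zero, Function.comp_apply, id, hf,
    map_add, map_mul, conj_conj]
  push_cast
  rw [← mul_conj']
  ring

theorem lipschitzWith_mul_conj_ite_add {f : ℂ → ℂ} {a w : ℂ} {b : Bool}
    (hf : ∀ z, f z = a * (if b then conj z else z) + w) : LipschitzWith ‖a‖₊ f :=
  LipschitzWith.of_dist_le_mul fun y z => by
    cases b <;> simp [hf, dist_eq, ← mul_sub, ← map_sub]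

/-- The similitudes of type `[Id, Id]`. -/
def IsPosHomothety (f : ℂ → ℂ) : Prop :=
  ∃ (c : ℝ) (w : ℂ), 0 < c ∧ ∀ z, f z = c * z + w

theorem exists_iterate_isPosHomothety {f : ℂ → ℂ} {r : ℝ} (hr : 0 < r) (q : ℚ) (b : Bool)
    (w : ℂ) (hf : ∀ z, f z = r * exp (2 * Real.pi * ((q : ℝ) : ℂ) * I) *
      (if b then conj z else z) + w) :
    ∃ n, 0 < n ∧ IsPosHomothety f^[n] := by
  set a : ℂ := r * exp (2 * Real.pi * ((q : ℝ) : ℂ) * I)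
  cases b
  · refine ⟨q.den, q.pos, r ^ q.den, (∑ i ∈ Finset.range q.den, a ^ i) * w, pow_pos hr _,
      fun z => ?_⟩
    rw [iterate_affine_apply (by simpa using hf), mul_pow, exp_two_pi_rat_mul_I_pow_den]
    push_cast
    ring
  · exact ⟨2, two_pos, ‖a‖ ^ 2, _, by simp [a, norm_exp, hr],
      iterate_two_conj_affine_apply (by simpa using hf)⟩

theorem dist_iterate_succ_le {X : Type*} [PseudoMetricSpace X] {f : X → X} {K : NNReal}
    (hf : LipschitzWith K f) {p : X} {R : ℝ} (hR : 0 ≤ R)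
    (hmaps : MapsTo f (closedBall p R) (closedBall p R)) (n : ℕ) :
    dist (f^[n + 1] p) (f p) ≤ K * R := by
  rw [Function.iterate_succ_apply']
  calc dist (f (f^[n] p)) (f p) ≤ K * dist (f^[n] p) p := hf.dist_le_mul _ _
    _ ≤ K * R := by
      gcongr
      exact hmaps.iterate n (mem_closedBall_self hR)

theorem stmt_9_general (r θ : ℝ) (b : Bool) (w : ℂ) (ψ : ℂ → ℂ)
    (hr : r ∈ Set.Ioo (0:ℝ) 1) (hθ : ∃ a : ℚ, θ = (a : ℝ))
    (hψ : ∀ z, ψ z = (r : ℂ) *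
        (Complex.exp (2 * Real.pi * θ * Complex.I) *
          (if b then (starRingEnd ℂ) z else z)) + w)
    (ε : ℝ) (hrε : r ≤ ε) (x : ℂ) (hx : ψ 0 ∈ closedBall x ε)
    (hmap : ψ '' closedBall (0:ℂ) 1 ⊆ closedBall (0:ℂ) 1) :
    ∃ n : ℕ, 0 < n ∧
      (∃ (c : ℝ) (w' : ℂ), 0 < c ∧ ∀ z, ψ^[n] z = (c : ℂ) * z + w') ∧
      ψ^[n] 0 ∈ closedBall x (2 * ε) := by
  obtain ⟨q, rfl⟩ := hθ
  set a : ℂ := r * Complex.exp (2 * Real.pi * ((q : ℝ) : ℂ) * Complex.I)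
  have hψa : ∀ z, ψ z = a * (if b then conj z else z) + w := by
    simp only [hψ, a, mul_assoc, implies_true]
  have hnorm : ‖a‖ = r := by simp [a, norm_exp, abs_of_pos hr.1]
  obtain ⟨n, hn, hId⟩ := exists_iterate_isPosHomothety hr.1 q b w hψa
  refine ⟨n, hn, hId, ?_⟩
  obtain ⟨m, rfl⟩ : ∃ m, n = m + 1 := ⟨n - 1, by omega⟩
  have hstep := dist_iterate_succ_le (lipschitzWith_mul_conj_ite_add hψa) zero_le_one
    (mapsTo_iff_image_subset.2 hmap) m
  rw [mem_closedBall] at hx ⊢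
  calc dist (ψ^[m + 1] 0) x ≤ dist (ψ^[m + 1] 0) (ψ 0) + dist (ψ 0) x := dist_triangle _ _ _
    _ ≤ r + ε := by gcongr; simpa [hnorm] using hstep
    _ ≤ 2 * ε := by linarith

/-- If `ψ` is a contractive similitude of rational rotation type with ratio `r ≤ ε`,
`ψ(0) ∈ B(x, ε)`, and `ψ` maps the closed unit ball into itself, then some iterate
`ψⁿ` has type `[Id, Id]` and satisfies `ψⁿ(0) ∈ B(x, 2ε)`. -/
theorem stmt_9 (r θ : ℝ) (b : Bool) (w : ℂ) (ψ : ℂ → ℂ)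
    (hr : r ∈ Set.Ioo (0:ℝ) 1) (hθ : ∃ a : ℚ, θ = (a : ℝ))
    (hψ : ∀ z, ψ z = (r : ℂ) *
        (Complex.exp (2 * Real.pi * θ * Complex.I) *
          (if b then (starRingEnd ℂ) z else z)) + w)
    (ε : ℝ) (hε : 0 < ε) (hrε : r ≤ ε) (x : ℂ) (hx : ψ 0 ∈ closedBall x ε)
    (hmap : ψ '' closedBall (0:ℂ) 1 ⊆ closedBall (0:ℂ) 1) :
    ∃ n : ℕ, 0 < n ∧
      (∃ (c : ℝ) (w' : ℂ), 0 < c ∧ ∀ z, ψ^[n] z = (c : ℂ) * z + w') ∧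
      ψ^[n] 0 ∈ closedBall x (2 * ε) :=
  stmt_9_general r θ b w ψ hr hθ hψ ε hrε x hx hmap
end

section
/- Fix α > 0 and let B₀ be a closed ball, e a unit vector, ξ a unit vector orthogonal to e, and L_ξ the line through the origin in direction ξ. Then there exists r_α > 0 such that for every x on the line through the center of B₀ in direction e with distance at least r_α from B₀, and for every y ∈ B₀, the circle S(x, |x−y|) intersected with B₀ is contained in the cone C(y, L_ξ, α) = {z : dist(z−y, L_ξ) ≤ α|z−y|}. -/
/-!
If `x = c + t e` and `z` lies on the circle about `x` through `y`, expanding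
`‖z - x‖² = ‖y - x‖²` gives `2 t ⟪e, z - y⟫ = ⟪z - y, (z - c) + (y - c)⟫`, and for `y, z` in the
ball the right side is at most `2 R ‖z - y‖`. So `z - y` makes an angle with `e⊥ = ℝ ξ` whose sine
is at most `R / |t|`, which is below `α` as soon as `|t| ≥ R / α`.
-/

open Metric Set RealInnerProductSpace

section InnerProductSpace

variable {E : Type*} [NormedAddCommGroup E] [InnerProductSpace ℝ E]

theorem two_mul_inner_sub_eq_of_norm_sub_eq {u p v : E} (h : ‖u - v‖ = ‖p - v‖) :
    2 * ⟪v, u - p⟫ = ⟪u - p, u + p⟫ := by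
  have hsq : ‖u - v‖ ^ 2 = ‖p - v‖ ^ 2 := by rw [h]
  rw [norm_sub_sq_real, norm_sub_sq_real] at hsq
  rw [inner_sub_right, inner_sub_left, inner_add_right, inner_add_right,
    real_inner_self_eq_norm_sq, real_inner_self_eq_norm_sq]
  linarith [real_inner_comm u p, real_inner_comm u v, real_inner_comm p v]

theorem abs_mul_abs_inner_le_of_dist_eq {c e y z : E} {t R : ℝ}
    (hy : y ∈ closedBall c R) (hz : z ∈ closedBall c R)
    (h : dist z (c + t • e) = dist (c + t • e) y) :
    |t| * |⟪e, z - y⟫| ≤ R * ‖z - y‖ := by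
  have key : 2 * ⟪t • e, z - y⟫ = ⟪z - y, (z - c) + (y - c)⟫ := by
    rw [dist_comm (c + t • e), dist_eq_norm, dist_eq_norm, ← sub_sub, ← sub_sub] at h
    simpa using two_mul_inner_sub_eq_of_norm_sub_eq h
  rw [real_inner_smul_left] at key
  have hsum : ‖(z - c) + (y - c)‖ ≤ 2 * R := by
    rw [mem_closedBall, dist_eq_norm] at hy hz
    linarith [norm_add_le (z - c) (y - c)]
  have hcs := abs_real_inner_le_norm (z - y) ((z - c) + (y - c))
  rw [← key, abs_mul, abs_mul, abs_two] at hcs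
  nlinarith [norm_nonneg (z - y)]

theorem eq_inner_smul_add_inner_smul {e ξ : E} (h2 : Module.finrank ℝ E = 2)
    (hon : Orthonormal ℝ ![e, ξ]) (w : E) : w = ⟪e, w⟫ • e + ⟪ξ, w⟫ • ξ := by
  have hspan := hon.linearIndependent.span_eq_top_of_card_eq_finrank (by simp [h2])
  simpa [Fin.sum_univ_two, eq_comm] using (OrthonormalBasis.mk hon hspan.ge).sum_repr' w

theorem infDist_span_singleton_le_abs_inner {e ξ : E} (h2 : Module.finrank ℝ E = 2)
    (hon : Orthonormal ℝ ![e, ξ]) (w : E) :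
    infDist w (Submodule.span ℝ {ξ}) ≤ |⟪e, w⟫| := by
  have hmem : ⟪ξ, w⟫ • ξ ∈ Submodule.span ℝ {ξ} :=
    Submodule.smul_mem _ _ (Submodule.mem_span_singleton_self ξ)
  calc infDist w (Submodule.span ℝ {ξ}) ≤ dist w (⟪ξ, w⟫ • ξ) := infDist_le_dist_of_mem hmem
    _ = ‖⟪e, w⟫ • e‖ := by
      rw [dist_eq_norm, sub_eq_of_eq_add (eq_inner_smul_add_inner_smul h2 hon w)]
    _ = |⟪e, w⟫| := by
      rw [norm_smul, (orthonormal_vecCons_iff.mp hon).1, mul_one, Real.norm_eq_abs]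

end InnerProductSpace

/-- For a closed ball `B₀`, a unit vector `e`, and `ξ ⊥ e`, there is `r_α > 0` such that
for every point `x` on the line through the center of `B₀` in direction `e` at distance at
least `r_α` from `B₀`, and every `y ∈ B₀`, the circle `S(x, |x-y|)` meets `B₀` only inside
the cone `C(y, L_ξ, α)`. -/
theorem stmt_12 (α : ℝ) (hα : 0 < α) (c : ℂ) (R : ℝ) (hR : 0 < R)
    (e ξ : ℂ) (he : ‖e‖ = 1) (hξ : ‖ξ‖ = 1)
    (horth : (e * (starRingEnd ℂ) ξ).re = 0) :
    ∃ rα : ℝ, 0 < rα ∧ ∀ t : ℝ, ∀ x : ℂ, x = c + (t : ℂ) * e →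
      rα ≤ Metric.infDist x (closedBall c R) →
      ∀ y ∈ closedBall c R, ∀ z ∈ sphere x (dist x y) ∩ closedBall c R,
        Metric.infDist (z - y) ((Submodule.span ℝ {ξ} : Submodule ℝ ℂ) : Set ℂ)
          ≤ α * dist z y := by
  have hon : Orthonormal ℝ ![e, ξ] := by
    refine orthonormal_vecCons_iff.mpr ⟨he, fun i => ?_,
      orthonormal_subsingleton_iff.mpr fun _ => by simpa using hξ⟩
    fin_cases i
    simpa [Complex.inner, mul_comm] using horth
  refine ⟨R / α, div_pos hR hα, ?_⟩
  rintro t x rfl hx y hy z ⟨hzx, hz⟩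
  have ht : R / α ≤ |t| :=
    hx.trans <| (infDist_le_dist_of_mem (mem_closedBall_self hR.le)).trans_eq (by simp [he])
  have htR : R ≤ α * |t| := by rwa [div_le_iff₀ hα, mul_comm] at ht
  have hcone : |t| * |⟪e, z - y⟫| ≤ R * ‖z - y‖ :=
    abs_mul_abs_inner_le_of_dist_eq hy hz (by rwa [Complex.real_smul, ← mem_sphere])
  refine (infDist_span_singleton_le_abs_inner Complex.finrank_real_complex hon (z - y)).trans ?_
  refine le_of_mul_le_mul_left ?_ ((div_pos hR hα).trans_le ht)
  calc |t| * |⟪e, z - y⟫| ≤ R * ‖z - y‖ := hcone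
    _ ≤ α * |t| * ‖z - y‖ := by gcongr
    _ = |t| * (α * dist z y) := by rw [dist_eq_norm]; ring
end
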